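/- Strict monotonicity of the rotation number at irrationals: if F₀ and F₁ are lifts of continuous, non-decreasing, degree-one circle maps with F₀(x) < F₁(x) for all x, and the translation number ρ̃(F₀) is irrational, then ρ̃(F₀) < ρ̃(F₁). -/

import Mathlib

/-!
The gap `F₁ - F₀` is continuous, positive and `1`-periodic, so it is at least some `δ > 0`, and
then `F₁^[q] ≥ F₀^[q] + δ` by monotonicity. As `ρ₀` is irrational there are `q ≥ 1` and `p ∈ ℤ`
with `q ρ₀ < p < q ρ₀ + δ`. At a point `x` with `F₀^[q] x = x + q ρ₀` we get `F₁^[q] x ≥ x + p`,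
hence `q ρ₁ ≥ p > q ρ₀`.
-/

open Filter

/-- A lift of a continuous, non-decreasing, degree-one circle map. -/
def IsCircleLift (F : ℝ → ℝ) : Prop :=
  Continuous F ∧ Monotone F ∧ ∀ x : ℝ, F (x + 1) = F x + 1

open Set

theorem Irrational.exists_int_mul_add_int_mem_Ioo {α a b : ℝ} (hα : Irrational α) (hab : a < b) :
    ∃ n m : ℤ, n * α + m ∈ Ioo a b := by
  have hdense : Dense (AddSubgroup.closure {α, 1} : Set ℝ) :=
    dense_addSubgroupClosure_pair_iff.2 (by rwa [div_one])
  obtain ⟨x, hxS, hx⟩ := hdense.exists_between hab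
  obtain ⟨n, m, rfl⟩ := AddSubgroup.mem_closure_pair.1 hxS
  exact ⟨n, m, by simpa [zsmul_eq_mul] using hx⟩

theorem Irrational.exists_pos_nat_one_sub_mul_mem_Ioo {s : ℝ} (hs : Irrational s) (hs₀ : 0 < s)
    (hs₁ : s < 1) : ∃ k : ℕ, 0 < k ∧ 1 - k * s ∈ Ioo 0 s := by
  have hk : 0 < ⌊s⁻¹⌋₊ := Nat.floor_pos.2 ((one_le_inv₀ hs₀).2 hs₁.le)
  refine ⟨⌊s⁻¹⌋₊, hk, ?_, ?_⟩
  · have hle : (⌊s⁻¹⌋₊ : ℝ) * s ≤ 1 :=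
      (le_div_iff₀ hs₀).1 (by simpa [one_div] using Nat.floor_le (inv_nonneg.2 hs₀.le))
    have hne : (⌊s⁻¹⌋₊ : ℝ) * s ≠ 1 :=
      (hs.natCast_mul hk.ne').ne_one
    exact sub_pos.2 (hle.lt_of_ne hne)
  · have := (inv_lt_iff_one_lt_mul₀ hs₀).1 (Nat.lt_floor_add_one s⁻¹)
    linarith

theorem Irrational.exists_pos_nat_int_sub_mul_mem_Ioo {α δ : ℝ} (hα : Irrational α) (hδ : 0 < δ) :
    ∃ q : ℕ, 0 < q ∧ ∃ p : ℤ, p - q * α ∈ Ioo 0 δ := by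
  obtain ⟨n, m, hlo, hhi⟩ := hα.exists_int_mul_add_int_mem_Ioo (neg_lt_zero.2 (lt_min hδ one_pos))
  rcases lt_trichotomy n 0 with hn | rfl | hn
  · -- `Nα - m` is a small positive number: go once around the circle in steps of it.
    obtain ⟨N, rfl⟩ := Int.exists_eq_neg_ofNat hn.le
    have hN : 0 < N := by omega
    push_cast at hlo hhi
    obtain ⟨k, hk, hks⟩ := ((hα.natCast_mul hN.ne').sub_intCast m).exists_pos_nat_one_sub_mul_mem_Ioo
      (by linarith) (by linarith [min_le_right δ 1])
    refine ⟨k * N, by positivity, 1 + k * m, ?_⟩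
    simp only [mem_Ioo] at hks ⊢
    push_cast
    constructor <;> linarith [min_le_left δ 1]
  · have h1 : (-1 : ℝ) < m := by simpa using hlo.trans_le' (neg_le_neg (min_le_right δ 1))
    have h2 : (m : ℝ) < 0 := by simpa using hhi
    norm_cast at h1 h2
    omega
  · lift n to ℕ using hn.le
    refine ⟨n, by exact_mod_cast hn, -m, ?_⟩
    push_cast at hlo hhi ⊢
    constructor <;> linarith [min_le_left δ 1]

theorem Function.Periodic.exists_pos_forall_le_of_forall_pos {u : ℝ → ℝ} {c : ℝ}
    (hp : u.Periodic c) (hc : c ≠ 0) (hu : Continuous u) (hpos : ∀ x, 0 < u x) :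
    ∃ δ > 0, ∀ x, δ ≤ u x := by
  obtain ⟨_, ⟨x₀, rfl⟩, hmin⟩ := (hp.compact_of_continuous hc hu).exists_isLeast (range_nonempty u)
  exact ⟨u x₀, hpos x₀, fun x => hmin ⟨x, rfl⟩⟩

theorem Monotone.iterate_add_le_of_forall_add_le {f g : ℝ → ℝ} (hf : Monotone f) {δ : ℝ}
    (hδ : 0 ≤ δ) (hfg : ∀ x, f x + δ ≤ g x) {n : ℕ} (hn : 0 < n) (x : ℝ) :
    f^[n] x + δ ≤ g^[n] x := by
  obtain ⟨n, rfl⟩ := Nat.exists_eq_add_one_of_ne_zero hn.ne'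
  have hle : f^[n] x ≤ g^[n] x :=
    hf.iterate_le_of_le (fun y => le_of_add_le_of_nonneg_left (hfg y) hδ) n x
  rw [Function.iterate_succ_apply', Function.iterate_succ_apply']
  calc f (f^[n] x) + δ ≤ f (g^[n] x) + δ := by gcongr; exact hf hle
    _ ≤ g (g^[n] x) := hfg _

namespace CircleDeg1Lift

local notation "τ" => translationNumber

theorem exists_pos_forall_add_le_of_forall_lt {f g : CircleDeg1Lift} (hf : Continuous f)
    (hg : Continuous g) (h : ∀ x, f x < g x) : ∃ δ > 0, ∀ x, f x + δ ≤ g x := by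
  have hp : (fun x => g x - f x).Periodic 1 := fun x => by simp only [map_add_one]; ring
  obtain ⟨δ, hδ, hle⟩ := hp.exists_pos_forall_le_of_forall_pos one_ne_zero (hg.sub hf)
    (fun x => sub_pos.2 (h x))
  exact ⟨δ, hδ, fun x => by linarith [hle x]⟩

theorem translationNumber_lt_of_forall_add_le {f g : CircleDeg1Lift} (hf : Continuous f)
    (hτ : Irrational (τ f)) {δ : ℝ} (hδ : 0 < δ) (hfg : ∀ x, f x + δ ≤ g x) : τ f < τ g := by
  obtain ⟨q, hq, p, hp⟩ := hτ.exists_pos_nat_int_sub_mul_mem_Ioo hδ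
  obtain ⟨x, hx⟩ := (f ^ q).exists_eq_add_translationNumber (f.continuous_pow hf q)
  have hgain : (f ^ q) x + δ ≤ (g ^ q) x := by
    simpa only [coe_pow] using f.monotone.iterate_add_le_of_forall_add_le hδ.le hfg hq x
  have hpg : (p : ℝ) ≤ q * τ g := by
    rw [← translationNumber_pow]
    refine (g ^ q).le_translationNumber_of_add_int_le (x := x) ?_
    rw [hx, translationNumber_pow] at hgain
    linarith [hp.2]
  have : (q : ℝ) * τ f < q * τ g := by linarith [hp.1]
  exact lt_of_mul_lt_mul_left this (Nat.cast_nonneg q)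

theorem translationNumber_lt_of_forall_lt {f g : CircleDeg1Lift} (hf : Continuous f)
    (hg : Continuous g) (hτ : Irrational (τ f)) (h : ∀ x, f x < g x) : τ f < τ g :=
  let ⟨_, hδ, hfg⟩ := exists_pos_forall_add_le_of_forall_lt hf hg h
  translationNumber_lt_of_forall_add_le hf hτ hδ hfg

end CircleDeg1Lift

def IsCircleLift.toCircleDeg1Lift {F : ℝ → ℝ} (hF : IsCircleLift F) : CircleDeg1Lift :=
  ⟨⟨F, hF.2.1⟩, hF.2.2⟩

@[simp]
theorem IsCircleLift.coe_toCircleDeg1Lift {F : ℝ → ℝ} (hF : IsCircleLift F) :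
    ⇑hF.toCircleDeg1Lift = F :=
  rfl

/-- strict monotonicity of the translation number at irrationals. -/
theorem translation_number_strict_mono_at_irrational (F₀ F₁ : ℝ → ℝ)
    (hF₀ : IsCircleLift F₀) (hF₁ : IsCircleLift F₁)
    (hlt : ∀ x : ℝ, F₀ x < F₁ x) (ρ₀ ρ₁ : ℝ)
    (hρ₀ : ∀ x : ℝ, Tendsto (fun n : ℕ => (F₀^[n] x - x) / n) atTop (nhds ρ₀))
    (hρ₁ : ∀ x : ℝ, Tendsto (fun n : ℕ => (F₁^[n] x - x) / n) atTop (nhds ρ₁))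
    (hirr : Irrational ρ₀) :
    ρ₀ < ρ₁ := by
  have hτ₀ : hF₀.toCircleDeg1Lift.translationNumber = ρ₀ :=
    CircleDeg1Lift.translationNumber_eq_of_tendsto₀ _ (by simpa using hρ₀ 0)
  have hτ₁ : hF₁.toCircleDeg1Lift.translationNumber = ρ₁ :=
    CircleDeg1Lift.translationNumber_eq_of_tendsto₀ _ (by simpa using hρ₁ 0)
  subst hτ₀ hτ₁
  exact CircleDeg1Lift.translationNumber_lt_of_forall_lt hF₀.1 hF₁.1 hirr hlt
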